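/- arXiv:1812.04578 — 4 statements merged into one kernel-verified Lean document; each statement's English description precedes it below -/
import Mathlib

section
/- Let n ≥ 3, view S_n as the group of permutations of ℤ/nℤ, and let τ ∈ N_{S_n}(C) be given by τ(x) = dx + r with d ∈ (ℤ/nℤ)^× and r ∈ ℤ/nℤ. Then τ is conjugate in S_n to the permutation τ̃ : x ↦ dx + r', where r' is the smallest nonnegative integer congruent to r modulo gcd(n, d−1). -/
/-- The `n`-cycle `x ↦ x + 1` on `ℤ/nℤ`, as a permutation. -/
def cyc (n : ℕ) : Equiv.Perm (ZMod n) := Equiv.addLeft (1 : ZMod n)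

/-!
Conjugating `x ↦ d x + r` by the translation `x ↦ x + s` gives `x ↦ d x + (r - (d - 1) s)`,
so the translation part only matters modulo the ideal generated by `d - 1`. In `ℤ/nℤ` this
ideal contains `gcd(n, d - 1)` by Bézout, hence contains `r - r'`.
-/

theorem Equiv.Perm.addLeft_mul_mul_addLeft_inv_apply_of_affine {R : Type*} [Ring R]
    {τ : Equiv.Perm R} {d r : R} (hτ : ∀ x, τ x = d * x + r) (s x : R) :
    (Equiv.addLeft s * τ * (Equiv.addLeft s)⁻¹) x = d * x + (r - (d - 1) * s) := by
  simp only [Equiv.Perm.mul_apply, Equiv.Perm.inv_def, Equiv.addLeft_symm, Equiv.coe_addLeft,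
    hτ, mul_add, mul_neg, sub_mul, one_mul]
  abel

theorem ZMod.dvd_natCast_gcd_val {n : ℕ} [NeZero n] (a : ZMod n) :
    a ∣ (Nat.gcd n a.val : ZMod n) := by
  have hbezout : ((Nat.gcd n a.val : ℤ) : ZMod n) =
      ((n * Nat.gcdA n a.val + a.val * Nat.gcdB n a.val : ℤ) : ZMod n) := by
    rw [← Nat.gcd_eq_gcd_ab]
  push_cast [ZMod.natCast_self, ZMod.natCast_zmod_val] at hbezout
  exact ⟨_, by simpa using hbezout⟩

theorem ZMod.natCast_dvd_sub_natCast_val_mod {n : ℕ} [NeZero n] (r : ZMod n) (k : ℕ) :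
    (k : ZMod n) ∣ r - ((r.val % k : ℕ) : ZMod n) := by
  have hr : ((k * (r.val / k) + r.val % k : ℕ) : ZMod n) = r := by
    rw [Nat.div_add_mod, ZMod.natCast_zmod_val]
  exact ⟨(r.val / k : ℕ), by nth_rw 1 [← hr]; push_cast; ring⟩

theorem normalizer_conjugate_reduced_translation_general
    (n : ℕ) [NeZero n] (τ : Equiv.Perm (ZMod n))
    (d : (ZMod n)ˣ) (r : ZMod n) (hform : ∀ x : ZMod n, τ x = (d : ZMod n) * x + r) :
    ∃ τ' : Equiv.Perm (ZMod n),
      (∀ x : ZMod n, τ' x =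
        (d : ZMod n) * x + ((r.val % Nat.gcd n ((d : ZMod n) - 1).val : ℕ) : ZMod n)) ∧
      IsConj τ τ' := by
  obtain ⟨s, hs⟩ := (ZMod.dvd_natCast_gcd_val ((d : ZMod n) - 1)).trans
    (ZMod.natCast_dvd_sub_natCast_val_mod r _)
  refine ⟨Equiv.addLeft s * τ * (Equiv.addLeft s)⁻¹, fun x => ?_, isConj_iff.mpr ⟨_, rfl⟩⟩
  rw [Equiv.Perm.addLeft_mul_mul_addLeft_inv_apply_of_affine hform, ← hs, sub_sub_cancel]

/-- If `τ ∈ N_{S_n}(C)` is given by `τ(x) = d·x + r` with `d ∈ (ℤ/nℤ)ˣ`, then `τ` is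
conjugate in `S_n` to the permutation `τ̃ : x ↦ d·x + r'`, where `r'` is the smallest
nonnegative integer congruent to `r` modulo `gcd(n, d − 1)`. -/
theorem normalizer_conjugate_reduced_translation
    (n : ℕ) (hn : 3 ≤ n) [NeZero n] (τ : Equiv.Perm (ZMod n))
    (hτ : τ ∈ Subgroup.normalizer ((Subgroup.zpowers (cyc n) : Subgroup (Equiv.Perm (ZMod n))) : Set (Equiv.Perm (ZMod n))))
    (d : (ZMod n)ˣ) (r : ZMod n) (hform : ∀ x : ZMod n, τ x = (d : ZMod n) * x + r) :
    ∃ τ' : Equiv.Perm (ZMod n),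
      (∀ x : ZMod n, τ' x =
        (d : ZMod n) * x + ((r.val % Nat.gcd n ((d : ZMod n) - 1).val : ℕ) : ZMod n)) ∧
      IsConj τ τ' :=
  normalizer_conjugate_reduced_translation_general n τ d r hform
end

section
/- Let n ≥ 3, view S_n as the group of permutations of ℤ/nℤ, and let τ ∈ N_{S_n}(C) be given by τ(x) = dx + r, with cycle type (m^k, 1, 1) for some integers m ≥ 2 and k. Then: n is even; gcd(n, d−1) = 2 and 2 divides r, so τ is conjugate to τ̃ : x ↦ dx, whose two fixed points are 0 and n/2; and if 4 divides n, then m = 2. -/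
open Equiv Function

theorem Units.fixedPoints_mulLeft {R : Type*} [Ring R] (d : Rˣ) :
    fixedPoints (Units.mulLeft d) = {x | ((d : R) - 1) * x = 0} := by
  ext x
  simp [IsFixedPt, sub_mul, sub_eq_zero]

theorem Units.isConj_mulLeft_of_isFixedPt {R : Type*} [Ring R] {τ : Perm R} {d : Rˣ} {r x₀ : R}
    (hτ : ∀ x, τ x = d * x + r) (hx₀ : IsFixedPt τ x₀) : IsConj τ (Units.mulLeft d) := by
  refine isConj_iff.2 ⟨Equiv.addRight (-x₀), Equiv.ext fun x => ?_⟩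
  rw [IsFixedPt, hτ] at hx₀
  simp only [neg_addRight, neg_neg, Perm.coe_mul, coe_addRight, comp_apply, hτ, Units.mulLeft_apply]
  rw [mul_add, add_assoc (d * x : R), hx₀, add_neg_cancel_right]

theorem Equiv.Perm.two_mem_cycleType_of_apply_apply_eq {α : Type*} [Fintype α] [DecidableEq α]
    {σ : Perm α} {x : α} (hx : σ x ≠ x) (hσx : σ (σ x) = x) : 2 ∈ σ.cycleType := by
  have hc := σ.isCycle_cycleOf hx
  have hsq : σ.cycleOf x ^ 2 = 1 :=
    (hc.pow_eq_one_iff' (x := x) (by simpa using hx)).2 (by simp [pow_two, hσx])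
  have hord : orderOf (σ.cycleOf x) = 2 :=
    orderOf_eq_prime hsq fun h => hx (by rw [← cycleOf_apply_self, h, one_apply])
  rw [hc.orderOf] at hord
  rw [cycleType_def, ← hord]
  exact Multiset.mem_map_of_mem _ (cycleOf_mem_cycleFactorsFinset_iff.2 (mem_support.2 hx))

namespace ZMod

variable {n : ℕ} {a : ZMod n}

theorem ncard_setOf_mul_eq_zero [NeZero n] (a : ZMod n) :
    {x : ZMod n | a * x = 0}.ncard = n.gcd a.val := by
  have h := IsAddCyclic.card_nsmulAddMonoidHom_ker (ZMod n) a.val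
  rw [Nat.card_zmod] at h
  have hker :
      ((nsmulAddMonoidHom a.val : ZMod n →+ ZMod n).ker : Set (ZMod n)) = {x | a * x = 0} := by
    ext x
    simp [nsmul_eq_mul]
  rw [← h, ← hker]
  rfl

theorem dvd_val_mul {p : ℕ} (hpn : p ∣ n) (hpa : p ∣ a.val) (b : ZMod n) : p ∣ (a * b).val := by
  rw [val_mul]
  exact (Nat.dvd_mod_iff hpn).2 (hpa.mul_right _)

theorem natCast_div_ne_zero [NeZero n] {p : ℕ} (hp : 1 < p) (hpn : p ≤ n) :
    ((n / p : ℕ) : ZMod n) ≠ 0 := by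
  rw [Ne, natCast_eq_zero_iff]
  intro h
  have hpos : 0 < n / p := Nat.div_pos hpn (by omega)
  have hle := Nat.le_of_dvd hpos h
  have hlt := Nat.div_lt_self (Nat.pos_of_neZero n) hp
  omega

theorem mul_natCast_div_two_eq_zero [NeZero n] (hn : 2 ∣ n) (ha : 2 ∣ a.val) :
    a * ((n / 2 : ℕ) : ZMod n) = 0 := by
  obtain ⟨u, hu⟩ := ha
  rw [← natCast_zmod_val a, ← Nat.cast_mul, natCast_eq_zero_iff, hu, mul_comm 2 u, mul_assoc,
    Nat.mul_div_cancel' hn]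
  exact Dvd.intro_left u rfl

theorem setOf_mul_eq_zero_of_gcd_eq_two [NeZero n] (hg : n.gcd a.val = 2) :
    {x : ZMod n | a * x = 0} = {0, ((n / 2 : ℕ) : ZMod n)} := by
  have hn : 2 ∣ n := hg ▸ n.gcd_dvd_left a.val
  have hhalf : ((n / 2 : ℕ) : ZMod n) ≠ 0 :=
    natCast_div_ne_zero one_lt_two (Nat.le_of_dvd (Nat.pos_of_neZero n) hn)
  refine (Set.eq_of_subset_of_ncard_le ?_ ?_).symm
  · refine Set.insert_subset (mul_zero a) (Set.singleton_subset_iff.2 ?_)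
    exact mul_natCast_div_two_eq_zero hn (hg ▸ n.gcd_dvd_right a.val)
  · rw [ncard_setOf_mul_eq_zero, hg, Set.ncard_pair hhalf.symm]

theorem mul_natCast_div_four [NeZero n] (h4 : 4 ∣ n) (hg : n.gcd a.val = 2) :
    a * ((n / 4 : ℕ) : ZMod n) = ((n / 2 : ℕ) : ZMod n) := by
  have h2 : 2 ∣ a.val := hg ▸ n.gcd_dvd_right a.val
  have h4' : ¬ 4 ∣ a.val := fun h => by simpa [hg] using Nat.dvd_gcd h4 h
  obtain ⟨v, hv⟩ : ∃ v, a.val = 4 * v + 2 := ⟨a.val / 4, by omega⟩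
  obtain ⟨q, rfl⟩ := h4
  rw [← natCast_zmod_val a, ← Nat.cast_mul, hv, show 4 * q / 4 = q by omega,
    show 4 * q / 2 = 2 * q by omega, show (4 * v + 2) * q = v * (4 * q) + 2 * q by ring,
    Nat.cast_add, (natCast_eq_zero_iff _ _).2 (dvd_mul_left _ _), zero_add]

theorem two_mem_cycleType_mulLeft_of_four_dvd [NeZero n] {d : (ZMod n)ˣ}
    (h4 : 4 ∣ n) (hg : n.gcd ((d : ZMod n) - 1).val = 2) : 2 ∈ (Units.mulLeft d).cycleType := by
  set c : ZMod n := ((n / 2 : ℕ) : ZMod n)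
  set x₁ : ZMod n := ((n / 4 : ℕ) : ZMod n)
  have h2n : 2 ∣ n := Nat.dvd_trans ⟨2, rfl⟩ h4
  have hc0 : c ≠ 0 := natCast_div_ne_zero one_lt_two (Nat.le_of_dvd (Nat.pos_of_neZero n) h2n)
  have h2c : 2 * c = 0 := by
    rw [show (2 : ZMod n) = ((2 : ℕ) : ZMod n) by norm_cast, ← Nat.cast_mul,
      Nat.mul_div_cancel' h2n, natCast_self]
  have hdc : (d : ZMod n) * c = c := by
    linear_combination mul_natCast_div_two_eq_zero h2n (hg ▸ n.gcd_dvd_right _)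
  have hdx₁ : (d : ZMod n) * x₁ = x₁ + c := by linear_combination mul_natCast_div_four h4 hg
  refine Perm.two_mem_cycleType_of_apply_apply_eq (x := x₁) ?_ ?_ <;>
    simp only [Units.mulLeft_apply, hdx₁, mul_add, hdc]
  · simpa using hc0
  · linear_combination h2c

end ZMod

theorem normalizer_two_fixed_points_general
    (n : ℕ) (hn : 3 ≤ n) [NeZero n] (τ : Equiv.Perm (ZMod n))
    (d : (ZMod n)ˣ) (r : ZMod n) (hform : ∀ x : ZMod n, τ x = (d : ZMod n) * x + r)
    (m k : ℕ)
    (hcyc : τ.cycleType = Multiset.replicate k m) (hmk : m * k = n - 2) :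
    Even n ∧
    Nat.gcd n ((d : ZMod n) - 1).val = 2 ∧
    2 ∣ r.val ∧
    (∃ τ' : Equiv.Perm (ZMod n),
      (∀ x : ZMod n, τ' x = (d : ZMod n) * x) ∧
      IsConj τ τ' ∧
      {x : ZMod n | τ' x = x} = {0, ((n / 2 : ℕ) : ZMod n)}) ∧
    (4 ∣ n → m = 2) := by
  have two_fixed (σ : Perm (ZMod n)) (hσ : σ.cycleType = .replicate k m) :
      (fixedPoints σ).ncard = 2 := by
    rw [← Nat.card_coe_set_eq, Nat.card_eq_fintype_card, σ.card_fixedPoints, hσ,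
      Multiset.sum_replicate, smul_eq_mul, mul_comm k m, ZMod.card]
    omega
  obtain ⟨x₀, hx₀⟩ : (fixedPoints τ).Nonempty :=
    Set.nonempty_of_ncard_ne_zero (by rw [two_fixed τ hcyc]; norm_num)
  have hconj : IsConj τ (Units.mulLeft d) := Units.isConj_mulLeft_of_isFixedPt hform hx₀
  have hcyc' : (Units.mulLeft d).cycleType = .replicate k m :=
    Perm.isConj_iff_cycleType_eq.1 hconj ▸ hcyc
  have hgcd : n.gcd ((d : ZMod n) - 1).val = 2 := by
    rw [← ZMod.ncard_setOf_mul_eq_zero, ← Units.fixedPoints_mulLeft]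
    exact two_fixed _ hcyc'
  have h2n : 2 ∣ n := hgcd ▸ n.gcd_dvd_left _
  have hr : r = ((d : ZMod n) - 1) * -x₀ := by
    linear_combination (hform x₀).symm.trans hx₀
  refine ⟨even_iff_two_dvd.2 h2n, hgcd, hr ▸ ZMod.dvd_val_mul h2n (hgcd ▸ n.gcd_dvd_right _) _,
    ⟨Units.mulLeft d, fun _ => rfl, hconj,
      (Units.fixedPoints_mulLeft d).trans (ZMod.setOf_mul_eq_zero_of_gcd_eq_two hgcd)⟩,
    fun h4 => ?_⟩
  have h2 := ZMod.two_mem_cycleType_mulLeft_of_four_dvd h4 hgcd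
  rw [hcyc'] at h2
  exact (Multiset.eq_of_mem_replicate h2).symm

/-- Let `τ ∈ N_{S_n}(C)` be given by `τ(x) = d·x + r`, with cycle type `(m^k, 1, 1)`
(i.e. `k` cycles of length `m ≥ 2` and two fixed points, so `m·k = n − 2`). Then `n` is
even; `gcd(n, d−1) = 2` and `2 ∣ r`, so `τ` is conjugate to `τ̃ : x ↦ d·x`, whose two fixed
points are `0` and `n/2`; and if `4 ∣ n` then `m = 2`. -/
theorem normalizer_two_fixed_points
    (n : ℕ) (hn : 3 ≤ n) [NeZero n] (τ : Equiv.Perm (ZMod n))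
    (hτ : τ ∈ Subgroup.normalizer ((Subgroup.zpowers (cyc n) : Subgroup (Equiv.Perm (ZMod n))) : Set (Equiv.Perm (ZMod n))))
    (d : (ZMod n)ˣ) (r : ZMod n) (hform : ∀ x : ZMod n, τ x = (d : ZMod n) * x + r)
    (m k : ℕ) (hm : 2 ≤ m)
    (hcyc : τ.cycleType = Multiset.replicate k m) (hmk : m * k = n - 2) :
    Even n ∧
    Nat.gcd n ((d : ZMod n) - 1).val = 2 ∧
    2 ∣ r.val ∧
    (∃ τ' : Equiv.Perm (ZMod n),
      (∀ x : ZMod n, τ' x = (d : ZMod n) * x) ∧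
      IsConj τ τ' ∧
      {x : ZMod n | τ' x = x} = {0, ((n / 2 : ℕ) : ZMod n)}) ∧
    (4 ∣ n → m = 2) :=
  normalizer_two_fixed_points_general n hn τ d r hform m k hcyc hmk
end

section
/- Let n ≥ 3, let c ∈ S_n be the n-cycle x ↦ x+1 on ℤ/nℤ, and let τ ∈ N_{S_n}(⟨c⟩) have cycle type (m^k, 1, 1) for some integers m ≥ 2 and k. Then for any integer j, the cycle type of c^j τ is: (m^k, 1, 1) if j is even; (ℓ^{n/ℓ}) for some divisor ℓ of n, if j is odd and m = 2; (m^k, 2) if j is odd and m > 2 is even; and ((2m)^{k/2}, 2) if j is odd and m is odd. In particular, if H ≤ S_n is such that (τ, H) is C-admissible, then for odd j no conjugate of c^j τ lies in H. -/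
/-- A subgroup `H` of the symmetric group avoids a cycle type `μ` if it contains no element
of cycle type `μ` (Mathlib's `cycleType` records only the cycle lengths `≥ 2`). -/
def Avoids {n : ℕ} [NeZero n] (H : Subgroup (Equiv.Perm (ZMod n))) (μ : Multiset ℕ) : Prop :=
  ∀ h ∈ H, Equiv.Perm.cycleType h ≠ μ

/-- The pair `(τ', H)` is `C`-admissible: `τ' ∈ N_{S_n}(C)` has cycle type
`(m^{(n−1)/m}, 1)` or `(m^{(n−2)/m}, 1, 1)` with `k = ⌊(n−1)/m⌋` the number of `m`-cycles,
and `H` avoids the cycle types `(ℓ^{n/ℓ})` for every divisor `ℓ > 1` of `n`, `(m^k, 2)`,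
and `((2m)^{k/2}, 2)` when `m` is odd. -/
def CAdmissible (n : ℕ) [NeZero n] (τ' : Equiv.Perm (ZMod n)) (H : Subgroup (Equiv.Perm (ZMod n)))
    (m k : ℕ) : Prop :=
  τ' ∈ Subgroup.normalizer (Subgroup.zpowers (cyc n) : Set (Equiv.Perm (ZMod n))) ∧
  2 ≤ m ∧ k = (n - 1) / m ∧
  τ'.cycleType = Multiset.replicate k m ∧ (m * k = n - 1 ∨ m * k = n - 2) ∧
  (∀ ℓ : ℕ, ℓ ∣ n → 1 < ℓ → Avoids H (Multiset.replicate (n / ℓ) ℓ)) ∧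
  Avoids H (2 ::ₘ Multiset.replicate k m) ∧
  (Odd m → Avoids H (2 ::ₘ Multiset.replicate (k / 2) (2 * m)))

open Finset

namespace Equiv.Perm

variable {α : Type*} [Fintype α] [DecidableEq α] {σ : Perm α} {x : α} {L : ℕ}

theorem pow_apply_eq_self_iff_card_support_cycleOf_dvd (hx : σ x ≠ x) (t : ℕ) :
    (σ ^ t) x = x ↔ #(σ.cycleOf x).support ∣ t := by
  have hc := σ.isCycle_cycleOf hx
  rw [← cycleOf_pow_apply_self, ← hc.pow_eq_one_iff' (by rwa [cycleOf_apply_self]),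
    ← hc.orderOf, orderOf_dvd_iff_pow_eq_one]

theorem card_support_cycleOf_eq_of_pow_apply_eq_self_iff (hL : L ≠ 1)
    (h : ∀ t, (σ ^ t) x = x ↔ L ∣ t) : #(σ.cycleOf x).support = L := by
  have hx : σ x ≠ x := fun hx ↦ hL (Nat.dvd_one.1 ((h 1).1 (by rwa [pow_one])))
  have hdvd := fun t ↦ (h t).symm.trans (pow_apply_eq_self_iff_card_support_cycleOf_dvd hx t)
  exact Nat.dvd_antisymm ((hdvd _).1 dvd_rfl) ((hdvd _).2 dvd_rfl)

theorem card_support_cycleOf_mem_cycleType (hx : x ∈ σ.support) :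
    #(σ.cycleOf x).support ∈ σ.cycleType := by
  rw [cycleType_def]
  exact Multiset.mem_map_of_mem _ (cycleOf_mem_cycleFactorsFinset_iff.2 hx)

theorem exists_cycleType_eq_replicate (h : ∀ x ∈ σ.support, #(σ.cycleOf x).support = L) :
    ∃ c, c * L = #σ.support ∧ σ.cycleType = Multiset.replicate c L := by
  have hrep : σ.cycleType = Multiset.replicate (Multiset.card σ.cycleType) L := by
    refine Multiset.eq_replicate_card.2 fun ℓ hℓ ↦ ?_
    obtain ⟨f, hf, rfl⟩ := Multiset.mem_map.1 (cycleType_def σ ▸ hℓ)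
    obtain ⟨y, hy⟩ := (mem_cycleFactorsFinset_iff.1 hf).1.nonempty_support
    rw [Function.comp_apply, cycle_is_cycleOf hy hf]
    exact h y (mem_cycleFactorsFinset_support_le hf hy)
  refine ⟨_, ?_, hrep⟩
  rw [← sum_cycleType, hrep, Multiset.sum_replicate, smul_eq_mul, Multiset.card_replicate]

theorem exists_cycleType_eq_cons_replicate {p : α} (hp : p ∈ σ.support)
    (h : ∀ x ∈ σ.support, x ∉ (σ.cycleOf p).support → #(σ.cycleOf x).support = L) :
    ∃ c, #(σ.cycleOf p).support + c * L = #σ.support ∧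
      σ.cycleType = #(σ.cycleOf p).support ::ₘ Multiset.replicate c L := by
  set f := σ.cycleOf p
  have hf : f ∈ σ.cycleFactorsFinset := cycleOf_mem_cycleFactorsFinset_iff.2 hp
  set ρ := σ * f⁻¹
  have hdisj : ρ.Disjoint f := disjoint_mul_inv_of_mem_cycleFactorsFinset hf
  have hσ : σ = ρ * f := (inv_mul_cancel_right σ f).symm
  obtain ⟨c, hcard, htype⟩ := exists_cycleType_eq_replicate (σ := ρ) fun y hy ↦ by
    have hfy : f y = y := notMem_support.1 (hdisj.mem_imp hy)
    have hcyc : σ.cycleOf y = ρ.cycleOf y := by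
      rw [hσ]; exact cycleOf_mul_of_apply_right_eq_self hdisj.commute y hfy
    have hσy : y ∈ σ.support := by
      rw [mem_support, hσ, Perm.mul_apply, hfy]; exact mem_support.1 hy
    rw [← hcyc]
    exact h y hσy (hdisj.mem_imp hy)
  refine ⟨c, ?_, ?_⟩
  · rw [hσ, hdisj.card_support_mul, ← hcard, add_comm]
  · rw [hσ, hdisj.cycleType_mul, htype, (σ.isCycle_cycleOf (mem_support.1 hp)).cycleType,
      Multiset.add_comm, Multiset.singleton_add]

theorem pow_apply_eq_self_iff_of_cycleType_eq_replicate {k m : ℕ}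
    (h : σ.cycleType = Multiset.replicate k m) (hx : σ x ≠ x) (t : ℕ) :
    (σ ^ t) x = x ↔ m ∣ t := by
  have hmem := card_support_cycleOf_mem_cycleType (mem_support.2 hx)
  rw [h] at hmem
  rw [pow_apply_eq_self_iff_card_support_cycleOf_dvd hx, Multiset.eq_of_mem_replicate hmem]

theorem exists_apply_eq_self_iff_eq_or_eq {p : α} (hp : σ p = p) (h : #σ.supportᶜ = 2) :
    ∃ q ≠ p, ∀ z, σ z = z ↔ z = p ∨ z = q := by
  have hp' : p ∈ σ.supportᶜ := by simpa using hp
  obtain ⟨q, hq⟩ : ∃ q, σ.supportᶜ.erase p = {q} :=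
    Finset.card_eq_one.1 (by rw [card_erase_of_mem hp', h])
  have hq' : q ∈ σ.supportᶜ.erase p := hq ▸ mem_singleton_self q
  refine ⟨q, (mem_erase.1 hq').1, fun z ↦ ?_⟩
  rw [← notMem_support, ← mem_compl, ← insert_erase hp', hq]
  simp

end Equiv.Perm

open Equiv.Perm

theorem AddSubgroup.pow_apply_sub_self_mem_iff_even {G : Type*} [AddGroup G] {H : AddSubgroup G}
    (hH : H.index = 2) {σ : Equiv.Perm G} (hσ : ∀ y, σ y - y ∉ H) (t : ℕ) (x : G) :
    (σ ^ t) x - x ∈ H ↔ Even t := by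
  induction t with
  | zero => simp
  | succ t ih =>
    rw [pow_succ', Equiv.Perm.mul_apply, ← sub_add_sub_cancel _ ((σ ^ t) x),
      add_mem_iff_of_index_two hH, ih, Nat.even_add_one, iff_false_left (hσ _)]

theorem AddSubgroup.intCast_mem_of_even {R : Type*} [Ring R] {H : AddSubgroup R} (hH : H.index = 2)
    {j : ℤ} (hj : Even j) : (j : R) ∈ H := by
  obtain ⟨i, rfl⟩ := hj
  rw [Int.cast_add]
  exact AddSubgroup.add_self_mem_of_index_two hH _

theorem AddSubgroup.intCast_sub_one_mem_of_odd {R : Type*} [Ring R] {H : AddSubgroup R}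
    (hH : H.index = 2) {j : ℤ} (hj : Odd j) : (j : R) - 1 ∈ H := by
  obtain ⟨i, rfl⟩ := hj
  rw [Int.cast_add, Int.cast_one, add_sub_cancel_right]
  exact intCast_mem_of_even hH (even_two_mul i)

theorem ZMod.one_notMem_of_index_ne_one {n : ℕ} {H : AddSubgroup (ZMod n)} (hH : H.index ≠ 1) :
    (1 : ZMod n) ∉ H := by
  refine fun h1 ↦ hH (AddSubgroup.index_eq_one.2 (eq_top_iff.2 fun x _ ↦ ?_))
  obtain ⟨k, rfl⟩ := ZMod.intCast_surjective x
  simpa using H.zsmul_mem h1 k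

section Affine

variable {R : Type*} [Ring R]

def affinePerm (a : Rˣ) (b : R) : Equiv.Perm R := (Units.mulLeft a).trans (Equiv.addRight b)

@[simp]
theorem affinePerm_apply (a : Rˣ) (b x : R) : affinePerm a b x = a * x + b := rfl

theorem affinePerm_mul (a a' : Rˣ) (b b' : R) :
    affinePerm a b * affinePerm a' b' = affinePerm (a * a') (a * b' + b) := by
  ext x
  simp [mul_add, mul_assoc, add_assoc]

theorem affinePerm_one (b : R) : affinePerm 1 b = Equiv.addRight b := by
  ext x
  simp

theorem affinePerm_zero_pow_apply (a : Rˣ) (t : ℕ) (x : R) :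
    (affinePerm a 0 ^ t) x = (a : R) ^ t * x := by
  induction t with
  | zero => simp
  | succ t ih => rw [pow_succ', Equiv.Perm.mul_apply, ih, affinePerm_apply, add_zero, pow_succ',
      mul_assoc]

theorem affinePerm_pow_apply_sub (a : Rˣ) (b : R) (t : ℕ) (x y : R) :
    (affinePerm a b ^ t) x - (affinePerm a b ^ t) y = (a : R) ^ t * (x - y) := by
  induction t with
  | zero => simp
  | succ t ih => rw [pow_succ', Equiv.Perm.mul_apply, Equiv.Perm.mul_apply, affinePerm_apply,
      affinePerm_apply, add_sub_add_right_eq_sub, ← mul_sub, ih, pow_succ', mul_assoc]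

def subOneRange (a : R) : AddSubgroup R := (AddMonoidHom.mulLeft (a - 1)).range

theorem mem_subOneRange {a b : R} : b ∈ subOneRange a ↔ ∃ z, (a - 1) * z = b := Iff.rfl

theorem affinePerm_apply_sub_self_mem_iff {a : Rˣ} {b : R} (x : R) :
    affinePerm a b x - x ∈ subOneRange (a : R) ↔ b ∈ subOneRange (a : R) := by
  have hx : ((a : R) - 1) * x ∈ subOneRange (a : R) := ⟨x, rfl⟩
  rw [affinePerm_apply, show (a : R) * x + b - x = ((a : R) - 1) * x + b by noncomm_ring,
    AddSubgroup.add_mem_cancel_left _ hx]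

theorem isConj_affinePerm {a : Rˣ} {b b' : R} (h : b' - b ∈ subOneRange (a : R)) :
    IsConj (affinePerm a b) (affinePerm a b') := by
  obtain ⟨z, hz⟩ := mem_subOneRange.1 h
  refine isConj_iff.2 ⟨Equiv.addRight (-z), Equiv.ext fun x ↦ ?_⟩
  simp only [Equiv.Perm.mul_apply, Equiv.Perm.inv_def, Equiv.addRight_symm, Equiv.coe_addRight,
    affinePerm_apply, neg_neg]
  rw [eq_add_of_sub_eq hz.symm]
  noncomm_ring

theorem even_of_affinePerm_pow_apply_eq_self {a : Rˣ} {b : R}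
    (hindex : (subOneRange (a : R)).index = 2) (hb : b ∉ subOneRange (a : R)) {t : ℕ} {x : R}
    (h : (affinePerm a b ^ t) x = x) : Even t := by
  rw [← AddSubgroup.pow_apply_sub_self_mem_iff_even hindex
    (fun y ↦ (affinePerm_apply_sub_self_mem_iff y).not.2 hb) t x, h, sub_self]
  exact zero_mem _

theorem index_subOneRange_eq_two [Finite R] {a e : R} (he : e ≠ 0)
    (hfix : ∀ z, a * z = z ↔ z = 0 ∨ z = e) : (subOneRange a).index = 2 := by
  have hker : ((AddMonoidHom.mulLeft (a - 1)).ker : Set R) = {0, e} := by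
    ext z
    simp [sub_mul, sub_eq_zero, hfix]
  rw [subOneRange, AddSubgroup.index_range, ← SetLike.coe_sort_coe, hker, Nat.card_coe_set_eq,
    Set.ncard_pair he.symm]

theorem mem_subOneRange_of_card_support_lt [Fintype R] [DecidableEq R] {a : Rˣ} {b : R}
    (h : #(affinePerm a b).support < Fintype.card R) : b ∈ subOneRange (a : R) := by
  obtain ⟨x, -, hx⟩ := exists_mem_notMem_of_card_lt_card (s := (affinePerm a b).support)
    (t := univ) (by rwa [card_univ])
  refine (affinePerm_apply_sub_self_mem_iff x).1 ?_
  rw [notMem_support.1 hx, sub_self]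
  exact zero_mem _

end Affine

section AffineCycleType

variable {R : Type*} [Ring R] {a : Rˣ} {b e : R}

theorem add_self_eq_zero_of_mul_eq_self_iff (he : e ≠ 0)
    (hfix : ∀ z, (a : R) * z = z ↔ z = 0 ∨ z = e) : e + e = 0 := by
  have hae := (hfix e).2 (Or.inr rfl)
  refine ((hfix (e + e)).1 (by rw [mul_add, hae])).resolve_right fun h ↦ he ?_
  rwa [add_eq_right] at h

theorem notMem_subOneRange_of_not_dvd_two {m : ℕ} (he : e ≠ 0)
    (hfix : ∀ z, (a : R) * z = z ↔ z = 0 ∨ z = e)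
    (hper : ∀ y, y ≠ 0 → y ≠ e → ∀ t, (a : R) ^ t * y = y ↔ m ∣ t)
    (hm : ¬m ∣ 2) :
    e ∉ subOneRange (a : R) := by
  rintro ⟨f, hf : ((a : R) - 1) * f = e⟩
  have haf : (a : R) * f = f + e := by rw [← hf]; noncomm_ring
  have hf0 : f ≠ 0 := by rintro rfl; exact he (by rw [← hf, mul_zero])
  have hfe : f ≠ e := by
    rintro rfl
    exact he (by rw [← hf, sub_mul, one_mul, sub_eq_zero]; exact (hfix f).2 (Or.inr rfl))
  refine hm ((hper f hf0 hfe 2).1 ?_)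
  rw [pow_two, mul_assoc, haf, mul_add, haf, (hfix e).2 (Or.inr rfl), add_assoc,
    add_self_eq_zero_of_mul_eq_self_iff he hfix, add_zero]

theorem sq_eq_one_of_mul_eq_self_iff (hfix : ∀ z, (a : R) * z = z ↔ z = 0 ∨ z = e)
    (hper : ∀ y, y ≠ 0 → y ≠ e → ∀ t, (a : R) ^ t * y = y ↔ 2 ∣ t) :
    (a : R) ^ 2 = 1 := by
  suffices h : ∀ y, (a : R) ^ 2 * y = y by simpa using h 1
  intro y
  by_cases hy : y = 0 ∨ y = e
  · rw [pow_two, mul_assoc, (hfix y).2 hy, (hfix y).2 hy]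
  · rw [not_or] at hy
    exact (hper y hy.1 hy.2 2).2 dvd_rfl

theorem exists_affinePerm_apply_eq_add_of_notMem (hae : (a : R) * e = e) (he2 : e + e = 0)
    (hindex : (subOneRange (a : R)).index = 2) (hb : b ∉ subOneRange (a : R))
    (heR : e ∉ subOneRange (a : R)) :
    ∃ p, affinePerm a b p = p + e ∧ affinePerm a b (p + e) = p := by
  obtain ⟨p, hp : ((a : R) - 1) * p = e - b⟩ : e - b ∈ subOneRange (a : R) := by
    rw [sub_eq_add_neg, AddSubgroup.add_mem_iff_of_index_two hindex, AddSubgroup.neg_mem_iff]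
    exact iff_of_false heR hb
  have hap : (a : R) * p = p + (e - b) := by rw [← hp]; noncomm_ring
  refine ⟨p, by rw [affinePerm_apply, hap]; abel, ?_⟩
  rw [affinePerm_apply, mul_add, hap, hae, show p + (e - b) + e + b = p + (e + e) by abel, he2,
    add_zero]

variable [Fintype R] [DecidableEq R]

theorem exists_mul_eq_self_iff_of_cycleType {k m : ℕ}
    (h : (affinePerm a 0).cycleType = Multiset.replicate k m) (hcard : m * k + 2 = Fintype.card R) :
    ∃ e ≠ 0, (∀ z, (a : R) * z = z ↔ z = 0 ∨ z = e) ∧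
      ∀ y, y ≠ 0 → y ≠ e → ∀ t, (a : R) ^ t * y = y ↔ m ∣ t := by
  have hsupp : #(affinePerm a 0).support = m * k := by
    rw [← sum_cycleType, h, Multiset.sum_replicate, smul_eq_mul, mul_comm]
  obtain ⟨e, he, hfix⟩ :=
    exists_apply_eq_self_iff_eq_or_eq (σ := affinePerm a 0) (p := 0) (by simp)
    (by rw [card_compl, hsupp]; omega)
  simp only [affinePerm_apply, add_zero] at hfix
  refine ⟨e, he, hfix, fun y hy0 hye t ↦ ?_⟩
  rw [← affinePerm_zero_pow_apply]
  exact pow_apply_eq_self_iff_of_cycleType_eq_replicate h (by simp [hfix, hy0, hye]) t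

theorem cycleType_affinePerm_of_sq_eq_one (ha : (a : R) ^ 2 = 1)
    (hindex : (subOneRange (a : R)).index = 2) (hb : b ∉ subOneRange (a : R)) :
    ∃ c, c * (2 * addOrderOf ((a : R) * b + b)) = Fintype.card R ∧
      (affinePerm a b).cycleType = Multiset.replicate c (2 * addOrderOf ((a : R) * b + b)) := by
  have hsq : affinePerm a b ^ 2 = Equiv.addRight ((a : R) * b + b) := by
    rw [pow_two, affinePerm_mul, ← pow_two, show a ^ 2 = 1 from Units.ext (by simpa using ha),
      affinePerm_one]
  have hper : ∀ x t, (affinePerm a b ^ t) x = x ↔ 2 * addOrderOf ((a : R) * b + b) ∣ t := by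
    intro x t
    rcases Nat.even_or_odd' t with ⟨s, rfl | rfl⟩
    · rw [pow_mul, hsq, Equiv.nsmul_addRight, Equiv.coe_addRight, add_eq_left,
        Nat.mul_dvd_mul_iff_left two_pos, addOrderOf_dvd_iff_nsmul_eq_zero]
    · refine iff_of_false (fun h ↦ ?_) (fun h ↦ ?_)
      · exact Nat.not_even_two_mul_add_one s (even_of_affinePerm_pow_apply_eq_self hindex hb h)
      · exact Nat.not_even_two_mul_add_one s (even_iff_two_dvd.2 ((dvd_mul_right 2 _).trans h))
  have hsupp : (affinePerm a b).support = univ := eq_univ_of_forall fun x ↦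
    mem_support.2 fun h ↦
      Nat.not_even_one (even_of_affinePerm_pow_apply_eq_self hindex hb (t := 1) (by rwa [pow_one]))
  obtain ⟨c, hc, htype⟩ := exists_cycleType_eq_replicate fun x _ ↦
    card_support_cycleOf_eq_of_pow_apply_eq_self_iff (by omega) (hper x)
  exact ⟨c, by rw [hc, hsupp, card_univ], htype⟩

theorem cycleType_affinePerm_eq_cons_replicate_lcm {m : ℕ} (he : e ≠ 0)
    (hfix : ∀ z, (a : R) * z = z ↔ z = 0 ∨ z = e)
    (hper : ∀ y, y ≠ 0 → y ≠ e → ∀ t, (a : R) ^ t * y = y ↔ m ∣ t)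
    (hindex : (subOneRange (a : R)).index = 2) (hb : b ∉ subOneRange (a : R))
    (heR : e ∉ subOneRange (a : R)) :
    ∃ c, 2 + c * Nat.lcm 2 m = Fintype.card R ∧
      (affinePerm a b).cycleType = 2 ::ₘ Multiset.replicate c (Nat.lcm 2 m) := by
  set π := affinePerm a b
  have heven {t : ℕ} {x : R} (h : (π ^ t) x = x) : 2 ∣ t :=
    even_iff_two_dvd.1 (even_of_affinePerm_pow_apply_eq_self hindex hb h)
  obtain ⟨p, hπp, hπpe⟩ := exists_affinePerm_apply_eq_add_of_notMem ((hfix e).2 (Or.inr rfl))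
    (add_self_eq_zero_of_mul_eq_self_iff he hfix) hindex hb heR
  have hperp (t : ℕ) : (π ^ t) p = p ↔ 2 ∣ t := by
    refine ⟨heven, fun ⟨s, hs⟩ ↦ ?_⟩
    rw [hs, pow_mul]
    exact pow_apply_eq_self_of_apply_eq_self (by rw [pow_two, Equiv.Perm.mul_apply,
      hπp, hπpe]) s
  have hperx (x : R) (hxp : x ≠ p) (hxe : x ≠ p + e) (t : ℕ) :
      (π ^ t) x = x ↔ Nat.lcm 2 m ∣ t := by
    rw [Nat.lcm_dvd_iff, ← hperp, ← hper (x - p) (sub_ne_zero.2 hxp)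
      (fun h ↦ hxe (by rw [← h, add_sub_cancel])), ← affinePerm_pow_apply_sub a b]
    refine ⟨fun h ↦ ?_, fun ⟨h₁, h₂⟩ ↦ by rwa [h₁, sub_left_inj] at h₂⟩
    have h₁ := (hperp t).2 (heven h)
    exact ⟨h₁, by rw [h, h₁]⟩
  have hsupp : π.support = univ := eq_univ_of_forall fun x ↦
    mem_support.2 fun h ↦ by simpa using heven (t := 1) (by rwa [pow_one])
  have hpsupp : p ∈ π.support := hsupp ▸ mem_univ p
  have hcard_p : #(π.cycleOf p).support = 2 :=
    card_support_cycleOf_eq_of_pow_apply_eq_self_iff (by omega) hperp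
  have hlcm : Nat.lcm 2 m ≠ 1 := fun h ↦ by simpa [h] using Nat.dvd_lcm_left 2 m
  obtain ⟨c, hc, htype⟩ := exists_cycleType_eq_cons_replicate hpsupp
    (L := Nat.lcm 2 m) fun x _ hx ↦ by
      rw [mem_support_cycleOf_iff, not_and] at hx
      refine card_support_cycleOf_eq_of_pow_apply_eq_self_iff hlcm (hperx x ?_ ?_)
      · rintro rfl; exact hx SameCycle.rfl hpsupp
      · rintro rfl; exact hx (hπp ▸ SameCycle.rfl.apply_right) hpsupp
  rw [hcard_p, hsupp, card_univ] at hc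
  rw [hcard_p] at htype
  exact ⟨c, hc, htype⟩

theorem cycleType_affinePerm_of_notMem_subOneRange {k m : ℕ}
    (h0 : (affinePerm a 0).cycleType = Multiset.replicate k m) (hcard : m * k + 2 = Fintype.card R)
    (hm : 2 ≤ m) (hb : b ∉ subOneRange (a : R)) :
    (m = 2 → ∃ ℓ, 2 ≤ ℓ ∧ ℓ ∣ Fintype.card R ∧
      (affinePerm a b).cycleType = Multiset.replicate (Fintype.card R / ℓ) ℓ) ∧
    (2 < m → Even m → (affinePerm a b).cycleType = 2 ::ₘ Multiset.replicate k m) ∧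
    (Odd m → (affinePerm a b).cycleType = 2 ::ₘ Multiset.replicate (k / 2) (2 * m)) := by
  obtain ⟨e, he, hfix, hper⟩ := exists_mul_eq_self_iff_of_cycleType h0 hcard
  have hindex := index_subOneRange_eq_two he hfix
  have hgt (hm2 : 2 < m) := cycleType_affinePerm_eq_cons_replicate_lcm he hfix hper hindex hb
    (notMem_subOneRange_of_not_dvd_two he hfix hper fun h ↦ by
      have := Nat.le_of_dvd two_pos h; omega)
  refine ⟨fun hm2 ↦ ?_, fun hm2 hme ↦ ?_, fun hmo ↦ ?_⟩
  · subst hm2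
    obtain ⟨c, hc, htype⟩ := cycleType_affinePerm_of_sq_eq_one
      (sq_eq_one_of_mul_eq_self_iff hfix hper) hindex hb
    have := addOrderOf_pos ((a : R) * b + b)
    refine ⟨_, by omega, Dvd.intro_left c hc, ?_⟩
    rw [htype, ← hc, Nat.mul_div_cancel _ (by omega)]
  · obtain ⟨c, hc, htype⟩ := hgt hm2
    rw [Nat.lcm_eq_right (even_iff_two_dvd.1 hme)] at hc htype
    rwa [Nat.eq_of_mul_eq_mul_right (by omega : 0 < m) (by linarith : c * m = k * m)] at htype
  · have hm2 : 2 < m := by obtain ⟨i, rfl⟩ := hmo; omega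
    obtain ⟨c, hc, htype⟩ := hgt hm2
    rw [Nat.Coprime.lcm_eq_mul (Nat.coprime_two_left.2 hmo)] at hc htype
    have hk : k = 2 * c := Nat.eq_of_mul_eq_mul_left (by omega : 0 < m) (by linarith)
    rwa [hk, Nat.mul_div_cancel_left _ two_pos]

end AffineCycleType

theorem cyc_zpow_mul_affinePerm {n : ℕ} (j : ℤ) (a : (ZMod n)ˣ) (b : ZMod n) :
    cyc n ^ j * affinePerm a b = affinePerm a (b + j) := by
  ext x
  simp [cyc]
  ring

theorem exists_eq_affinePerm_of_mem_normalizer {n : ℕ} [NeZero n] {τ : Equiv.Perm (ZMod n)}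
    (hτ : τ ∈ Subgroup.normalizer (Subgroup.zpowers (cyc n) : Set (Equiv.Perm (ZMod n)))) :
    ∃ a b, τ = affinePerm a b := by
  obtain ⟨s, hs⟩ := Subgroup.mem_zpowers_iff.1
    ((Subgroup.mem_normalizer_iff.1 hτ (cyc n)).1 (Subgroup.mem_zpowers _))
  have hstep (y : ZMod n) : τ (y + 1) = τ y + s := by
    have := congr($hs (τ y))
    simp [cyc, Equiv.zsmul_addLeft] at this
    rw [add_comm, ← this, add_comm]
  have hlin (x : ZMod n) : τ x = s * x + τ 0 := by
    obtain ⟨k, rfl⟩ := ZMod.natCast_zmod_surjective x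
    induction k with
    | zero => simp
    | succ k ih => rw [Nat.cast_succ, hstep, ih]; ring
  obtain ⟨x, hx⟩ := τ.surjective (1 + τ 0)
  have hunit : IsUnit (s : ZMod n) := IsUnit.of_mul_eq_one x (by
    rw [hlin] at hx; exact add_right_cancel hx)
  exact ⟨hunit.unit, τ 0, Equiv.ext fun x ↦ by rw [hlin, affinePerm_apply, IsUnit.unit_spec]⟩

/-- Cycle types of `c^j τ` for `τ ∈ N_{S_n}(C)` of cycle type `(m^k, 1, 1)`: if `j` is even
the cycle type is again `(m^k, 1, 1)`; if `j` is odd it is `(ℓ^{n/ℓ})` for some divisor `ℓ`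
of `n` when `m = 2`, it is `(m^k, 2)` when `m > 2` is even, and it is `((2m)^{k/2}, 2)`
when `m` is odd. In particular if `(τ, H)` is `C`-admissible then for odd `j` no conjugate
of `c^j τ` lies in `H`. -/
theorem cycleType_zpow_cyc_mul
    (n : ℕ) (hn : 3 ≤ n) [NeZero n] (τ : Equiv.Perm (ZMod n))
    (hτ : τ ∈ Subgroup.normalizer (Subgroup.zpowers (cyc n) : Set (Equiv.Perm (ZMod n))))
    (m k : ℕ) (hm : 2 ≤ m)
    (hcyc : τ.cycleType = Multiset.replicate k m) (hmk : m * k = n - 2) (j : ℤ) :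
    (Even j → (cyc n ^ j * τ).cycleType = Multiset.replicate k m) ∧
    (Odd j → m = 2 → ∃ ℓ : ℕ, ℓ ∣ n ∧
      (cyc n ^ j * τ).cycleType =
        Multiset.filter (fun c => 2 ≤ c) (Multiset.replicate (n / ℓ) ℓ)) ∧
    (Odd j → 2 < m → Even m →
      (cyc n ^ j * τ).cycleType = 2 ::ₘ Multiset.replicate k m) ∧
    (Odd j → Odd m →
      (cyc n ^ j * τ).cycleType = 2 ::ₘ Multiset.replicate (k / 2) (2 * m)) ∧
    (∀ H : Subgroup (Equiv.Perm (ZMod n)), CAdmissible n τ H m k →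
      Odd j → ∀ h ∈ H, ¬ IsConj (cyc n ^ j * τ) h) := by
  classical
  obtain ⟨u, b, rfl⟩ := exists_eq_affinePerm_of_mem_normalizer hτ
  have hcard : m * k + 2 = Fintype.card (ZMod n) := by rw [ZMod.card]; omega
  have hb : b ∈ subOneRange (u : ZMod n) := mem_subOneRange_of_card_support_lt (by
    rw [← sum_cycleType, hcyc, Multiset.sum_replicate, smul_eq_mul, mul_comm,
      ← hcard]
    omega)
  have h0 : (affinePerm u 0).cycleType = Multiset.replicate k m := by
    rw [← hcyc]
    exact isConj_iff_cycleType_eq.1 (isConj_affinePerm (by simpa using hb))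
  obtain ⟨e, he, hfix, -⟩ := exists_mul_eq_self_iff_of_cycleType h0 hcard
  have hindex := index_subOneRange_eq_two he hfix
  obtain ⟨htwo, heven, hodd⟩ := cycleType_affinePerm_of_notMem_subOneRange h0 hcard hm
    (ZMod.one_notMem_of_index_ne_one (by omega : (subOneRange (u : ZMod n)).index ≠ 1))
  rw [ZMod.card] at htwo
  have hconj {B : ZMod n} (hB : (j : ZMod n) - B ∈ subOneRange (u : ZMod n)) :
      (cyc n ^ j * affinePerm u b).cycleType = (affinePerm u B).cycleType := by
    rw [cyc_zpow_mul_affinePerm, ← isConj_iff_cycleType_eq, isConj_comm]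
    exact isConj_affinePerm (by rw [add_sub_assoc]; exact add_mem hb hB)
  have hodd_one (hj : Odd j) := hconj (AddSubgroup.intCast_sub_one_mem_of_odd hindex hj)
  refine ⟨fun hj ↦ (hconj (sub_mem (AddSubgroup.intCast_mem_of_even hindex hj) hb)).trans hcyc,
    fun hj hm2 ↦ ?_, fun hj hm2 hme ↦ (hodd_one hj).trans (heven hm2 hme),
    fun hj hmo ↦ (hodd_one hj).trans (hodd hmo), ?_⟩
  · obtain ⟨ℓ, hℓ, hℓn, htype⟩ := htwo hm2
    refine ⟨ℓ, hℓn, ?_⟩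
    rw [hodd_one hj, htype, Multiset.filter_eq_self.2 fun c hc ↦ by
      rwa [Multiset.eq_of_mem_replicate hc]]
  · rintro H ⟨-, -, -, -, -, hdiv, hev, hod⟩ hj h hh hc
    rw [isConj_iff_cycleType_eq, hodd_one hj] at hc
    rcases hm.eq_or_lt with hm2 | hm2
    · obtain ⟨ℓ, hℓ, hℓn, htype⟩ := htwo hm2.symm
      exact hdiv ℓ hℓn hℓ h hh (hc.symm.trans htype)
    · rcases Nat.even_or_odd m with hme | hmo
      · exact hev h hh (hc.symm.trans (heven hm2 hme))
      · exact hod hmo h hh (hc.symm.trans (hodd hmo))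
end

section
/- Let α = (α_1,…,α_r) be a composition of n with gcd(α_1,…,α_r) = 1. Then [n]_q divides the Gaussian multinomial [n choose α]_q in ℤ[q]; that is, C(α;q) = (1/[n]_q)·[n choose α]_q is a polynomial with integer coefficients. -/
open Polynomial in
/-- The q-analogue `[n]_q = 1 + q + ⋯ + q^{n-1}` as a polynomial in `ℤ[q]`. -/
noncomputable def qInt (n : ℕ) : Polynomial ℤ := ∑ i ∈ Finset.range n, X ^ i

/-- The q-factorial `[n]!_q = [n]_q [n-1]_q ⋯ [1]_q`. -/
noncomputable def qFactorial : ℕ → Polynomial ℤ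
  | 0 => 1
  | n + 1 => qInt (n + 1) * qFactorial n

open Polynomial

lemma qInt_monic {n : ℕ} (hn : n ≠ 0) : (qInt n).Monic :=
  monic_geom_sum_X hn

lemma qFactorial_ne_zero (n : ℕ) : qFactorial n ≠ 0 := by
  induction n with
  | zero => simp [qFactorial]
  | succ m ih =>
    exact mul_ne_zero (qInt_monic (Nat.succ_ne_zero m)).ne_zero ih

lemma rm_prod {ι : Type*} (s : Finset ι) (f : ι → Polynomial ℂ)
    (hf : ∀ i ∈ s, f i ≠ 0) (x : ℂ) :
    rootMultiplicity x (∏ i ∈ s, f i) = ∑ i ∈ s, rootMultiplicity x (f i) := by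
  classical
  induction s using Finset.cons_induction with
  | empty => simp [rootMultiplicity_eq_zero (by simp [IsRoot] : ¬ IsRoot (1 : Polynomial ℂ) x)]
  | cons a t ha ih =>
    rw [Finset.prod_cons, Finset.sum_cons,
      rootMultiplicity_mul (mul_ne_zero (hf a (Finset.mem_cons_self a t))
        (Finset.prod_ne_zero_iff.2 fun i hi => hf i (Finset.mem_cons_of_mem hi))),
      ih fun i hi => hf i (Finset.mem_cons_of_mem hi)]

lemma rm_geom {d : ℕ} {ζ : ℂ} (hζ : IsPrimitiveRoot ζ d) (hd : 2 ≤ d)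
    {k : ℕ} (hk : k ≠ 0) :
    rootMultiplicity ζ (∑ i ∈ Finset.range k, (X : Polynomial ℂ) ^ i) =
      if d ∣ k then 1 else 0 := by
  have hζ1 : ζ ≠ 1 := hζ.ne_one hd
  have hgeom : (∑ i ∈ Finset.range k, (X : Polynomial ℂ) ^ i) * (X - 1) = X ^ k - 1 :=
    geom_sum_mul X k
  have hXk : (X ^ k - 1 : Polynomial ℂ) ≠ 0 := by
    intro h
    have := congrArg (eval 0) h
    simp [zero_pow hk] at this
  have hmul := rootMultiplicity_mul (x := ζ) (hgeom ▸ hXk)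
  rw [hgeom] at hmul
  have hX1 : rootMultiplicity ζ (X - 1 : Polynomial ℂ) = 0 :=
    rootMultiplicity_eq_zero (by simp [IsRoot, sub_eq_zero, hζ1])
  rw [hX1, add_zero] at hmul
  rw [← hmul]
  by_cases hdk : d ∣ k
  · have hroot : IsRoot (X ^ k - 1 : Polynomial ℂ) ζ := by
      simp [IsRoot, sub_eq_zero, hζ.pow_eq_one_iff_dvd, hdk]
    have hsep : Separable (X ^ k - 1 : Polynomial ℂ) := by
      have := separable_X_pow_sub_C (1 : ℂ) (by exact_mod_cast hk) one_ne_zero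
      simpa using this
    have h1 := rootMultiplicity_le_one_of_separable hsep ζ
    have h2 := (rootMultiplicity_pos hXk).2 hroot
    rw [if_pos hdk]
    omega
  · rw [if_neg hdk]
    exact rootMultiplicity_eq_zero (by
      simp only [IsRoot, eval_sub, eval_pow, eval_X, eval_one, sub_eq_zero]
      rw [hζ.pow_eq_one_iff_dvd]
      exact hdk)

lemma qInt_map_C (k : ℕ) :
    (qInt k).map (Int.castRingHom ℂ) = ∑ i ∈ Finset.range k, (X : Polynomial ℂ) ^ i := by
  simp [qInt, Polynomial.map_sum]

lemma rm_qFactorial {d : ℕ} {ζ : ℂ} (hζ : IsPrimitiveRoot ζ d) (hd : 2 ≤ d) (m : ℕ) :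
    rootMultiplicity ζ ((qFactorial m).map (Int.castRingHom ℂ)) = m / d := by
  induction m with
  | zero =>
    simp only [qFactorial, Polynomial.map_one, Nat.zero_div]
    exact rootMultiplicity_eq_zero (by simp [IsRoot])
  | succ m ih =>
    have hmap_ne : ∀ j : ℕ, (qFactorial j).map (Int.castRingHom ℂ) ≠ 0 := fun j =>
      (Polynomial.map_ne_zero_iff (f := Int.castRingHom ℂ)
        (by exact_mod_cast Int.cast_injective)).2 (qFactorial_ne_zero j)
    have : (qFactorial (m + 1)).map (Int.castRingHom ℂ) =
        (qInt (m + 1)).map (Int.castRingHom ℂ) * (qFactorial m).map (Int.castRingHom ℂ) := by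
      simp [qFactorial, Polynomial.map_mul]
    rw [this, rootMultiplicity_mul (this ▸ hmap_ne (m + 1)), ih, qInt_map_C,
      rm_geom hζ hd (Nat.succ_ne_zero m)]
    by_cases hdm : d ∣ (m + 1) <;> simp [Nat.succ_div, hdm] <;> omega

lemma sum_div_lt {r d n : ℕ} (α : Fin r → ℕ) (hsum : ∑ i, α i = n)
    (hd : 2 ≤ d) (hdn : d ∣ n) (hnot : ¬ ∀ i, d ∣ α i) :
    ∑ i, α i / d < n / d := by
  obtain ⟨j, hj⟩ := not_forall.1 hnot
  have hlt : ∑ i, d * (α i / d) < ∑ i, α i := by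
    apply Finset.sum_lt_sum (fun i _ => Nat.mul_div_le (α i) d)
    exact ⟨j, Finset.mem_univ j, lt_of_le_of_ne (Nat.mul_div_le (α j) d)
      (fun h => hj ⟨α j / d, h.symm⟩)⟩
  rw [← Finset.mul_sum, hsum] at hlt
  have hn : d * (n / d) = n := Nat.mul_div_cancel' hdn
  have hd0 : 0 < d := by omega
  exact lt_of_mul_lt_mul_left (by omega) (Nat.zero_le d)

/-- If `α = (α_1, …, α_r)` is a composition of `n` with `gcd(α) = 1`, then `[n]_q` divides
the Gaussian multinomial `[n choose α]_q` in `ℤ[q]`; here `M` denotes the Gaussian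
multinomial, characterized by `M * ∏ i, [α_i]!_q = [n]!_q`. -/
theorem qInt_dvd_gaussian_multinomial
    (n r : ℕ) (α : Fin r → ℕ) (hsum : ∑ i, α i = n)
    (hgcd : Finset.univ.gcd α = 1)
    (M : Polynomial ℤ) (hM : M * ∏ i, qFactorial (α i) = qFactorial n) :
    qInt n ∣ M := by
  classical
  have hn : n ≠ 0 := by
    rintro rfl
    have : ∀ i ∈ Finset.univ, α i = 0 := by
      intro i hi
      exact (Finset.sum_eq_zero_iff).1 hsum i hi
    have : Finset.univ.gcd α = 0 := Finset.gcd_eq_zero_iff.2 this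
    omega
  have hM0 : M ≠ 0 := by
    intro h
    exact qFactorial_ne_zero n (by rw [← hM, h, zero_mul])
  -- For each d ∈ n.divisors.erase 1, cyclotomic d ℚ divides M.map ℚ
  have key : ∀ d ∈ n.divisors.erase 1, cyclotomic d ℚ ∣ M.map (Int.castRingHom ℚ) := by
    intro d hd
    obtain ⟨hd1, hdvd⟩ := Finset.mem_erase.1 hd
    have hdn : d ∣ n := (Nat.mem_divisors.1 hdvd).1
    have hd0 : d ≠ 0 := by
      rintro rfl
      exact hn (Nat.zero_dvd.1 hdn)
    have hd2 : 2 ≤ d := by omega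
    set ζ : ℂ := Complex.exp (2 * Real.pi * Complex.I / d)
    have hζ : IsPrimitiveRoot ζ d := Complex.isPrimitiveRoot_exp d hd0
    -- root multiplicity computation
    have hmapC : ∀ j : ℕ, (qFactorial j).map (Int.castRingHom ℂ) ≠ 0 := fun j =>
      (Polynomial.map_ne_zero_iff (f := Int.castRingHom ℂ)
        (by exact_mod_cast Int.cast_injective)).2 (qFactorial_ne_zero j)
    have hMC : M.map (Int.castRingHom ℂ) ≠ 0 :=
      (Polynomial.map_ne_zero_iff (f := Int.castRingHom ℂ)
        (by exact_mod_cast Int.cast_injective)).2 hM0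
    have hMmap : M.map (Int.castRingHom ℂ) *
        ∏ i, (qFactorial (α i)).map (Int.castRingHom ℂ) =
        (qFactorial n).map (Int.castRingHom ℂ) := by
      rw [← Polynomial.map_prod, ← Polynomial.map_mul, hM]
    have hprod_ne : (∏ i, (qFactorial (α i)).map (Int.castRingHom ℂ)) ≠ 0 :=
      Finset.prod_ne_zero_iff.2 fun i _ => hmapC (α i)
    have hrm := rootMultiplicity_mul (x := ζ) (hMmap ▸ hmapC n)
    rw [hMmap, rm_qFactorial hζ hd2, rm_prod _ _ (fun i _ => hmapC (α i))] at hrm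
    have hrmα : ∀ i : Fin r, rootMultiplicity ζ ((qFactorial (α i)).map (Int.castRingHom ℂ))
        = α i / d := fun i => rm_qFactorial hζ hd2 (α i)
    rw [Finset.sum_congr rfl (fun i _ => hrmα i)] at hrm
    have hnot : ¬ ∀ i, d ∣ α i := by
      intro h
      have : d ∣ Finset.univ.gcd α := Finset.dvd_gcd fun i _ => h i
      rw [hgcd] at this
      have := Nat.le_of_dvd one_pos this
      omega
    have hlt := sum_div_lt α hsum hd2 hdn hnot
    have hpos : 0 < rootMultiplicity ζ (M.map (Int.castRingHom ℂ)) := by omega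
    have hroot : IsRoot (M.map (Int.castRingHom ℂ)) ζ :=
      ((rootMultiplicity_pos hMC).1 hpos)
    -- ζ is a root of M over ℚ, so the minimal polynomial divides
    rw [cyclotomic_eq_minpoly_rat hζ (by omega)]
    apply minpoly.dvd ℚ ζ
    have hcomp : (algebraMap ℚ ℂ).comp (Int.castRingHom ℚ) = Int.castRingHom ℂ :=
      RingHom.ext_int _ _
    have : Polynomial.aeval ζ (M.map (Int.castRingHom ℚ)) =
        eval ζ (M.map (Int.castRingHom ℂ)) := by
      rw [aeval_def, eval₂_eq_eval_map, Polynomial.map_map, hcomp]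
    rw [this]
    exact hroot
  -- product of cyclotomics equals (qInt n).map ℚ
  have hX1ne : (X - 1 : Polynomial ℚ) ≠ 0 := by
    intro h
    have := congrArg (eval 0) h
    simp at this
  have hprodcyc : ∏ d ∈ n.divisors.erase 1, cyclotomic d ℚ =
      (qInt n).map (Int.castRingHom ℚ) := by
    have h1 : (1 : ℕ) ∈ n.divisors := Nat.one_mem_divisors.2 hn
    have hall := prod_cyclotomic_eq_X_pow_sub_one (Nat.pos_of_ne_zero hn) ℚ
    rw [← Finset.mul_prod_erase _ _ h1, cyclotomic_one] at hall
    have hq : (X - 1 : Polynomial ℚ) * ((qInt n).map (Int.castRingHom ℚ)) = X ^ n - 1 := by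
      have : (qInt n).map (Int.castRingHom ℚ) = ∑ i ∈ Finset.range n, (X : Polynomial ℚ) ^ i := by
        simp [qInt, Polynomial.map_sum]
      rw [this, mul_comm]
      exact geom_sum_mul X n
    exact mul_left_cancel₀ hX1ne (by rw [hall, hq])
  have hdvd : (qInt n).map (Int.castRingHom ℚ) ∣ M.map (Int.castRingHom ℚ) := by
    rw [← hprodcyc]
    apply Finset.prod_dvd_of_coprime
    · intro a _ b _ hab
      exact cyclotomic.isCoprime_rat hab
    · exact key
  exact (map_dvd_map (Int.castRingHom ℚ) (by exact_mod_cast Int.cast_injective)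
    (qInt_monic hn)).1 hdvd
end
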